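/- arXiv:2209.12301 — 2 statements merged into one kernel-verified Lean document; each statement's English description precedes it below -/
import Mathlib

section
/- Let D be a Shift-ECS, let v1 and v2 be shift nodes with labels k1, k2 ∈ ℤ. Extend D with fresh nodes v', v'', v''' where ℓ(v') = v'', λ(v') = k1, ℓ(v'') = ℓ(v1), r(v'') = v''', λ(v'') = ⊙, ℓ(v''') = ℓ(v2), λ(v''') = k2 − k1. Then in the extended structure D', the semantics satisfies ⟦D'⟧(v') = ⟦D⟧(v1) · ⟦D⟧(v2). -/
/-- Shift a string over `Ω × ℤ` by `k`: add `k` to every position. -/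
def sh {Ω : Type} (w : List (Ω × ℤ)) (k : ℤ) : List (Ω × ℤ) :=
  w.map (fun p => (p.1, p.2 + k))

def shL {Ω : Type} (L : Set (List (Ω × ℤ))) (k : ℤ) : Set (List (Ω × ℤ)) :=
  (fun w => sh w k) '' L

def catL {Ω : Type} (L1 L2 : Set (List (Ω × ℤ))) : Set (List (Ω × ℤ)) :=
  Set.image2 (· ++ ·) L1 L2

/-- Labels of a Shift-ECS node: an output letter, a shift value, union, or product. -/
inductive Lab (Ω : Type) where
  | bot (o : Ω)
  | shift (k : ℤ)
  | union
  | prod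

/-- A Shift-ECS: nodes with partial left/right children and a labeling. -/
structure ECS (Ω : Type) where
  V : Type
  l : V → Option V
  r : V → Option V
  lab : V → Lab Ω

/-- The semantics `⟦D⟧(v)` of a Shift-ECS, as an inductively defined
membership relation: singletons at bottom nodes, union at `∪`-nodes,
concatenation at `⊙`-nodes, and shifting at shift nodes. -/
inductive ECS.Sem {Ω : Type} (D : ECS Ω) : D.V → List (Ω × ℤ) → Prop
  | bot {v o} : D.lab v = .bot o → D.Sem v [(o, 1)]
  | unionL {v u w} : D.lab v = .union → D.l v = some u → D.Sem u w → D.Sem v w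
  | unionR {v u w} : D.lab v = .union → D.r v = some u → D.Sem u w → D.Sem v w
  | prod {v u1 u2 w1 w2} : D.lab v = .prod → D.l v = some u1 → D.r v = some u2 →
      D.Sem u1 w1 → D.Sem u2 w2 → D.Sem v (w1 ++ w2)
  | shift {v u k w} : D.lab v = .shift k → D.l v = some u → D.Sem u w → D.Sem v (sh w k)

/-- `⟦D⟧(v)` as a set. -/
def ECS.semSet {Ω : Type} (D : ECS Ω) (v : D.V) : Set (List (Ω × ℤ)) :=
  {w | D.Sem v w}

/-!
A shift node denotes the shift of its child's language. Shifting distributes over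
concatenation and composes additively, so shifting by `k1` the concatenation of `⟦ℓ(v1)⟧`
with `⟦ℓ(v2)⟧` shifted by `k2 - k1` yields `sh ⟦ℓ(v1)⟧ k1 · sh ⟦ℓ(v2)⟧ k2 = ⟦v1⟧ · ⟦v2⟧`.
-/

lemma sh_append {X : Type} (a b : List (X × ℤ)) (k : ℤ) :
    sh (a ++ b) k = sh a k ++ sh b k :=
  List.map_append

lemma sh_sh {X : Type} (w : List (X × ℤ)) (a b : ℤ) :
    sh (sh w a) b = sh w (a + b) := by
  simp [sh, add_assoc]

lemma shL_shL {X : Type} (L : Set (List (X × ℤ))) (a b : ℤ) :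
    shL (shL L a) b = shL L (a + b) := by
  simp only [shL, Set.image_image, sh_sh]

lemma shL_catL {X : Type} (L₁ L₂ : Set (List (X × ℤ))) (k : ℤ) :
    shL (catL L₁ L₂) k = catL (shL L₁ k) (shL L₂ k) := by
  simp only [shL, catL, Set.image_image2, Set.image2_image_left, Set.image2_image_right, sh_append]

namespace ECS

variable {Ω : Type} {D : ECS Ω}

def childSem (D : ECS Ω) : Option D.V → Set (List (Ω × ℤ))
  | none => ∅
  | some u => D.semSet u

lemma mem_childSem {o : Option D.V} {w : List (Ω × ℤ)} :
    w ∈ D.childSem o ↔ ∃ u, o = some u ∧ D.Sem u w := by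
  cases o <;> simp [childSem, semSet]

lemma semSet_of_lab_shift {v : D.V} {k : ℤ} (hv : D.lab v = .shift k) :
    D.semSet v = shL (D.childSem (D.l v)) k := by
  ext w
  constructor
  · intro h
    cases h with
    | shift hk hl hs =>
      obtain rfl : _ = k := Lab.shift.inj (hk.symm.trans hv)
      exact ⟨_, mem_childSem.2 ⟨_, hl, hs⟩, rfl⟩
    | _ => simp_all
  · rintro ⟨x, hx, rfl⟩
    obtain ⟨u, hl, hs⟩ := mem_childSem.1 hx
    exact .shift hv hl hs

lemma semSet_of_lab_prod {v : D.V} (hv : D.lab v = .prod) :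
    D.semSet v = catL (D.childSem (D.l v)) (D.childSem (D.r v)) := by
  ext w
  constructor
  · intro h
    cases h with
    | prod _ hl hr hs₁ hs₂ =>
      exact ⟨_, mem_childSem.2 ⟨_, hl, hs₁⟩, _, mem_childSem.2 ⟨_, hr, hs₂⟩, rfl⟩
    | _ => simp_all
  · rintro ⟨x, hx, y, hy, rfl⟩
    obtain ⟨u₁, hl, hs₁⟩ := mem_childSem.1 hx
    obtain ⟨u₂, hr, hs₂⟩ := mem_childSem.1 hy
    exact .prod hv hl hr hs₁ hs₂

end ECS

/-- Correctness of the product gadget: if `v1`, `v2` are shift nodes with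
labels `k1`, `k2`, and fresh nodes `v'`, `v''`, `v'''` are added with
`λ(v') = k1`, `ℓ(v') = v''`, `λ(v'') = ⊙`, `ℓ(v'') = ℓ(v1)`, `r(v'') = v'''`,
`λ(v''') = k2 - k1`, `ℓ(v''') = ℓ(v2)`, then in the extended structure
`⟦D'⟧(v') = ⟦D⟧(v1) · ⟦D⟧(v2)` (the semantics of old nodes being preserved
under extension with fresh nodes). -/
theorem prod_gadget_correct {Ω : Type} (D : ECS Ω) (v1 v2 v' v'' v''' : D.V)
    (k1 k2 : ℤ)
    (h1 : D.lab v1 = .shift k1) (h2 : D.lab v2 = .shift k2)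
    (hp : D.lab v' = .shift k1) (hpl : D.l v' = some v'')
    (hpp : D.lab v'' = .prod) (hppl : D.l v'' = D.l v1) (hppr : D.r v'' = some v''')
    (hppp : D.lab v''' = .shift (k2 - k1)) (hpppl : D.l v''' = D.l v2) :
    D.semSet v' = catL (D.semSet v1) (D.semSet v2) := by
  have hv''' : D.semSet v''' = shL (D.childSem (D.l v2)) (k2 - k1) := by
    rw [ECS.semSet_of_lab_shift hppp, hpppl]
  rw [ECS.semSet_of_lab_shift hp, hpl, ECS.childSem, ECS.semSet_of_lab_prod hpp, hppl, hppr,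
    ECS.childSem, hv''', shL_catL, shL_shL, sub_add_cancel, ← ECS.semSet_of_lab_shift h1,
    ← ECS.semSet_of_lab_shift h2]
end

section
/- Every sequential extended variable-set automaton A over variables X and alphabet Σ can be translated into an annotated automaton A' over alphabet Σ ∪ {#} and output alphabet 2^{markers of X} such that for every document d, the mappings in ⟦A⟧(d) are in bijection with the annotations in ⟦A'⟧(d#); moreover, if A is unambiguous then A' is unambiguous. -/
/-- An annotated automaton (AnnA) over input alphabet `A` and output alphabet
`Ω`: plain letter transitions `Δp`, annotated letter transitions `Δa`, an
initial state and final states. -/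
structure AnnA (Q A Ω : Type) where
  Δp : Q → A → Q → Prop
  Δa : Q → A → Ω → Q → Prop
  q0 : Q
  F : Set Q

/-- A run of an AnnA from state `p` over a document, recorded as a trace:
for each letter, the (optional) annotation used and the state reached. -/
inductive AnnA.Run {Q A Ω : Type} (M : AnnA Q A Ω) :
    Q → List A → List (Option Ω × Q) → Prop
  | nil {p} : M.Run p [] []
  | plain {p a q d tr} : M.Δp p a q → M.Run q d tr → M.Run p (a :: d) ((none, q) :: tr)
  | ann {p a o q d tr} : M.Δa p a o q → M.Run q d tr →
      M.Run p (a :: d) ((some o, q) :: tr)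

/-- The annotation of a trace starting after position `i`: the sequence of
pairs `(o, j)` for the positions `j` read with annotation `o` (1-indexed). -/
def annOf {Q Ω : Type} : ℕ → List (Option Ω × Q) → List (Ω × ℕ)
  | _, [] => []
  | i, (none, _) :: tr => annOf (i + 1) tr
  | i, (some o, _) :: tr => (o, i + 1) :: annOf (i + 1) tr

/-- The final state of a run starting at `p` with trace `tr`. -/
def finalState {Q Ω : Type} (p : Q) (tr : List (Option Ω × Q)) : Q :=
  (tr.map Prod.snd).getLastD p

/-- The semantics `⟦M⟧(d)`: the set of annotations of accepting runs over `d`. -/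
def AnnA.sem {Q A Ω : Type} (M : AnnA Q A Ω) (d : List A) : Set (List (Ω × ℕ)) :=
  {ν | ∃ tr, M.Run M.q0 d tr ∧ finalState M.q0 tr ∈ M.F ∧ annOf 0 tr = ν}

/-- A variable marker: `(true, x)` is `⊢x` (open) and `(false, x)` is `⊣x` (close). -/
abbrev Marker (X : Type) := Bool × X

/-- An extended variable-set automaton: letter transitions and extended
variable transitions labeled by nonempty sets of markers. -/
structure EVA (Q A X : Type) where
  Δl : Q → A → Q → Prop
  Δv : Q → Set (Marker X) → Q → Prop
  q0 : Q
  F : Set Q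

/-- One (possibly trivial) variable step: either no variable transition is
taken (`V = ∅`) or a variable transition on a nonempty set `V` is taken. -/
def EVA.VStep {Q A X : Type} (M : EVA Q A X) (p : Q) (V : Set (Marker X))
    (p' : Q) : Prop :=
  (V = ∅ ∧ p' = p) ∨ (V ≠ ∅ ∧ M.Δv p V p')

/-- A run of an extended VA over a document `d = a1...an`, recorded as the
trace of the marker sets `S1, ..., S_{n+1}` together with intermediate states;
it alternates optional variable steps with letter steps and ends with an
optional variable step, the last component being the final state. -/
inductive EVA.Run {Q A X : Type} (M : EVA Q A X) :
    Q → List A → List (Set (Marker X) × Q) → Q → Prop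
  | last {p V p'} : M.VStep p V p' → M.Run p [] [(V, p')] p'
  | cons {p V p' a q d tr pf} : M.VStep p V p' → M.Δl p' a q → M.Run q d tr pf →
      M.Run p (a :: d) ((V, p') :: tr) pf

/-- Validity of the sequence `Vs = S1...S_{n+1}` of marker sets of a run:
every marker occurs at most once, `⊢x` occurs iff `⊣x` does, and `⊢x` occurs
no later than `⊣x`. -/
def ValidVs {X : Type} (Vs : List (Set (Marker X))) : Prop :=
  (∀ m : Marker X, ∀ i j, i < Vs.length → j < Vs.length →
    m ∈ Vs.getD i ∅ → m ∈ Vs.getD j ∅ → i = j) ∧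
  (∀ x : X, (∃ i, i < Vs.length ∧ (true, x) ∈ Vs.getD i ∅) ↔
            (∃ j, j < Vs.length ∧ (false, x) ∈ Vs.getD j ∅)) ∧
  (∀ x : X, ∀ i j, i < Vs.length → j < Vs.length →
    (true, x) ∈ Vs.getD i ∅ → (false, x) ∈ Vs.getD j ∅ → i ≤ j)

/-- `μ` is the mapping defined by the marker-set sequence `Vs` (1-indexed):
`μ(x) = [i, j⟩` iff `⊢x ∈ S_i` and `⊣x ∈ S_j`. -/
def MapOf {X : Type} (Vs : List (Set (Marker X))) (μ : X → Option (ℕ × ℕ)) : Prop :=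
  ∀ x i j, μ x = some (i, j) ↔
    (1 ≤ i ∧ i ≤ Vs.length ∧ 1 ≤ j ∧ j ≤ Vs.length ∧
      (true, x) ∈ Vs.getD (i - 1) ∅ ∧ (false, x) ∈ Vs.getD (j - 1) ∅)

/-- The spanner semantics `⟦M⟧(d)`: mappings of accepting valid runs. -/
def EVA.sem {Q A X : Type} (M : EVA Q A X) (d : List A) :
    Set (X → Option (ℕ × ℕ)) :=
  {μ | ∃ tr pf, M.Run M.q0 d tr pf ∧ pf ∈ M.F ∧
        ValidVs (tr.map Prod.fst) ∧ MapOf (tr.map Prod.fst) μ}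

/-- `M` is sequential: every accepting run is valid. -/
def EVA.Sequential {Q A X : Type} (M : EVA Q A X) : Prop :=
  ∀ d tr pf, M.Run M.q0 d tr pf → pf ∈ M.F → ValidVs (tr.map Prod.fst)

/-- `M` is unambiguous: every mapping in `⟦M⟧(d)` arises from exactly one
accepting run. -/
def EVA.Unambiguous {Q A X : Type} (M : EVA Q A X) : Prop :=
  ∀ (d : List A) (μ : X → Option (ℕ × ℕ)) tr pf tr' pf',
    M.Run M.q0 d tr pf → pf ∈ M.F → MapOf (tr.map Prod.fst) μ →
    M.Run M.q0 d tr' pf' → pf' ∈ M.F → MapOf (tr'.map Prod.fst) μ →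
    tr = tr'

/-- An AnnA is unambiguous if each annotation in `⟦M⟧(d)` arises from exactly
one accepting run. -/
def AnnA.Unambiguous {Q A Ω : Type} (M : AnnA Q A Ω) : Prop :=
  ∀ (d : List A) (ν : List (Ω × ℕ)) (tr tr' : List (Option Ω × Q)),
    M.Run M.q0 d tr → finalState M.q0 tr ∈ M.F → annOf 0 tr = ν →
    M.Run M.q0 d tr' → finalState M.q0 tr' ∈ M.F → annOf 0 tr' = ν →
    tr = tr'

/-!
The annotated automaton reads position `i` of `d#` with annotation `Sᵢ`, the marker set of the
`i`-th variable step of an EVA run (plainly when `Sᵢ = ∅`). Its states record the EVA state right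
after that variable step together with the letter still to be read; these are exactly the data
of an EVA trace, so accepting traces of the two automata correspond one to one, which transfers
unambiguity. The annotation of a translated trace determines its marker sequence `S₁ ⋯ Sₙ₊₁`,
and by sequentiality every accepting marker sequence is valid, hence determines and is
determined by its mapping: both semantics are injective images of the set of accepting marker
sequences.
-/

lemma finalState_cons {Q Ω : Type} (p q : Q) (o : Option Ω) (tr : List (Option Ω × Q)) :
    finalState p ((o, q) :: tr) = finalState q tr :=
  List.getLastD_cons

section Translation

open Classical

variable {Q A X : Type}

/-- `mid p a`: the EVA has reached `p` by a variable step and reads `a` next. -/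
inductive AnnState (Q A : Type) : Type
  | init : Q → AnnState Q A
  | mid : Q → A → AnnState Q A
  | fin : Q → AnnState Q A

def AnnState.ofLetter : Option A → Q → AnnState Q A
  | some a, p => .mid p a
  | none, p => .fin p

noncomputable def toAnnotation (V : Set (Marker X)) : Option (Set (Marker X)) :=
  if V = ∅ then none else some V

noncomputable def annTrace (ws : List (Option A)) (tr : List (Set (Marker X) × Q)) :
    List (Option (Set (Marker X)) × AnnState Q A) :=
  List.zipWith (fun ℓ e => (toAnnotation e.1, .ofLetter ℓ e.2)) ws tr

noncomputable def markerAnnotation : ℕ → List (Set (Marker X)) → List (Set (Marker X) × ℕ)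
  | _, [] => []
  | i, V :: Vs =>
    if V = ∅ then markerAnnotation (i + 1) Vs else (V, i + 1) :: markerAnnotation (i + 1) Vs

lemma lt_of_mem_markerAnnotation :
    ∀ {Vs : List (Set (Marker X))} {i k : ℕ} {V : Set (Marker X)},
      (V, k) ∈ markerAnnotation i Vs → i < k
  | [], _, _, _, h => by simp [markerAnnotation] at h
  | W :: Vs, i, k, V, h => by
    simp only [markerAnnotation] at h
    split_ifs at h
    · exact (lt_of_mem_markerAnnotation h).trans' (Nat.lt_succ_self i)
    · rcases List.mem_cons.1 h with h | h
      · cases h; exact Nat.lt_succ_self i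
      · exact (lt_of_mem_markerAnnotation h).trans' (Nat.lt_succ_self i)

lemma markerAnnotation_inj :
    ∀ {Vs Vs' : List (Set (Marker X))} {i : ℕ}, Vs.length = Vs'.length →
      markerAnnotation i Vs = markerAnnotation i Vs' → Vs = Vs'
  | [], [], _, _, _ => rfl
  | V :: Vs, V' :: Vs', i, hl, h => by
    have head : V = V' ∧ markerAnnotation (i + 1) Vs = markerAnnotation (i + 1) Vs' := by
      by_cases hV : V = ∅ <;> by_cases hV' : V' = ∅ <;>
        simp only [markerAnnotation, hV, hV', if_true, if_false] at h
      · exact ⟨hV.trans hV'.symm, h⟩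
      · exact absurd (lt_of_mem_markerAnnotation (h ▸ List.mem_cons_self)) (lt_irrefl _)
      · exact absurd (lt_of_mem_markerAnnotation (h ▸ List.mem_cons_self)) (lt_irrefl _)
      · simpa using h
    rw [head.1, markerAnnotation_inj (by simpa using hl) head.2]

def IsSpan (Vs : List (Set (Marker X))) (x : X) (i j : ℕ) : Prop :=
  1 ≤ i ∧ i ≤ Vs.length ∧ 1 ≤ j ∧ j ≤ Vs.length ∧
    (true, x) ∈ Vs.getD (i - 1) ∅ ∧ (false, x) ∈ Vs.getD (j - 1) ∅

lemma ValidVs.isSpan_unique {Vs : List (Set (Marker X))} (hv : ValidVs Vs) {x : X}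
    {i j i' j' : ℕ} (h : IsSpan Vs x i j) (h' : IsSpan Vs x i' j') : i = i' ∧ j = j' := by
  obtain ⟨hi, hil, hj, hjl, hopen, hclose⟩ := h
  obtain ⟨hi', hil', hj', hjl', hopen', hclose'⟩ := h'
  have := hv.1 _ _ _ (by omega) (by omega) hopen hopen'
  have := hv.1 _ _ _ (by omega) (by omega) hclose hclose'
  omega

noncomputable def mappingOf (Vs : List (Set (Marker X))) (x : X) : Option (ℕ × ℕ) :=
  if h : ∃ s : ℕ × ℕ, IsSpan Vs x s.1 s.2 then some h.choose else none

lemma mapOf_mappingOf {Vs : List (Set (Marker X))} (hv : ValidVs Vs) :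
    MapOf Vs (mappingOf Vs) := by
  intro x i j
  change _ ↔ IsSpan Vs x i j
  unfold mappingOf
  split_ifs with h
  · refine ⟨fun hs => ?_, fun hij => ?_⟩
    · simpa [Option.some.inj hs] using h.choose_spec
    obtain ⟨hi, hj⟩ := hv.isSpan_unique h.choose_spec hij
    exact congrArg some (Prod.ext hi hj)
  · exact ⟨nofun, fun hij => (h ⟨(i, j), hij⟩).elim⟩

lemma MapOf.unique {Vs : List (Set (Marker X))} {μ μ' : X → Option (ℕ × ℕ)}
    (h : MapOf Vs μ) (h' : MapOf Vs μ') : μ = μ' :=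
  funext fun x => Option.ext fun ⟨i, j⟩ => (h x i j).trans (h' x i j).symm

lemma ValidVs.getD_subset_of_mapOf {Vs Vs' : List (Set (Marker X))} {μ : X → Option (ℕ × ℕ)}
    (hv : ValidVs Vs) (hm : MapOf Vs μ) (hm' : MapOf Vs' μ) {k : ℕ} (hk : k < Vs.length) :
    Vs.getD k ∅ ⊆ Vs'.getD k ∅ := by
  rintro ⟨_ | _, x⟩ hx
  · obtain ⟨i, hi, hopen⟩ := (hv.2.1 x).2 ⟨k, hk, hx⟩
    have := (hm x (i + 1) (k + 1)).2
      ⟨by omega, by omega, by omega, by omega, by simpa using hopen, by simpa using hx⟩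
    simpa using ((hm' x _ _).1 this).2.2.2.2.2
  · obtain ⟨j, hj, hclose⟩ := (hv.2.1 x).1 ⟨k, hk, hx⟩
    have := (hm x (k + 1) (j + 1)).2
      ⟨by omega, by omega, by omega, by omega, by simpa using hx, by simpa using hclose⟩
    simpa using ((hm' x _ _).1 this).2.2.2.2.1

lemma ValidVs.eq_of_mapOf {Vs Vs' : List (Set (Marker X))} {μ : X → Option (ℕ × ℕ)}
    (hv : ValidVs Vs) (hv' : ValidVs Vs') (hm : MapOf Vs μ) (hm' : MapOf Vs' μ)
    (hl : Vs.length = Vs'.length) : Vs = Vs' :=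
  List.ext_getElem hl fun k hk hk' => by
    simpa [List.getD_eq_getElem, hk, hk'] using
      (hv.getD_subset_of_mapOf hm hm' hk).antisymm (hv'.getD_subset_of_mapOf hm' hm hk')

namespace EVA

variable (M : EVA Q A X)

/-- The states from which the EVA may take its next variable step while the annotated
automaton is in `s`. -/
def Resumes : AnnState Q A → Q → Prop
  | .init q, p => p = q
  | .mid q a, p => M.Δl q a p
  | .fin _, _ => False

def MergedStep (s : AnnState Q A) (ℓ : Option A) (V : Set (Marker X)) (t : AnnState Q A) :
    Prop :=
  ∃ p p', M.Resumes s p ∧ M.VStep p V p' ∧ t = .ofLetter ℓ p'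

def toAnnA : AnnA (AnnState Q A) (Option A) (Set (Marker X)) where
  Δp s ℓ t := M.MergedStep s ℓ ∅ t
  Δa s ℓ V t := V ≠ ∅ ∧ M.MergedStep s ℓ V t
  q0 := .init M.q0
  F := AnnState.fin '' M.F

def markerSeqs (d : List A) : Set (List (Set (Marker X))) :=
  {Vs | ∃ tr pf, M.Run M.q0 d tr pf ∧ pf ∈ M.F ∧ tr.map Prod.fst = Vs}

variable {M}

lemma Run.length_eq {p : Q} {d : List A} {tr : List (Set (Marker X) × Q)} {pf : Q}
    (h : M.Run p d tr pf) : tr.length = d.length + 1 := by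
  induction h with
  | last => rfl
  | cons _ _ _ ih => simp [ih]

lemma toAnnA_run_cons {s t : AnnState Q A} {ℓ : Option A} {V : Set (Marker X)} {ws tr'}
    (h : M.MergedStep s ℓ V t) (hr : M.toAnnA.Run t ws tr') :
    M.toAnnA.Run s (ℓ :: ws) ((toAnnotation V, t) :: tr') := by
  by_cases hV : V = ∅
  · subst hV
    simpa [toAnnotation] using AnnA.Run.plain h hr
  · simpa [toAnnotation, hV] using AnnA.Run.ann (M := M.toAnnA) ⟨hV, h⟩ hr

lemma toAnnA_run_cons_inv {s : AnnState Q A} {ℓ : Option A} {ws tr'}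
    (h : M.toAnnA.Run s (ℓ :: ws) tr') :
    ∃ V t tr'', tr' = (toAnnotation V, t) :: tr'' ∧ M.MergedStep s ℓ V t ∧
      M.toAnnA.Run t ws tr'' := by
  cases h with
  | plain hδ hr => exact ⟨∅, _, _, by simp [toAnnotation], hδ, hr⟩
  | ann hδ hr => exact ⟨_, _, _, by simp [toAnnotation, hδ.1], hδ.2, hr⟩

lemma toAnnA_run_fin {f : Q} {ws tr'} (h : M.toAnnA.Run (.fin f) ws tr') :
    ws = [] ∧ tr' = [] := by
  cases ws with
  | nil => cases h; exact ⟨rfl, rfl⟩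
  | cons ℓ ws =>
    obtain ⟨_, _, _, _, ⟨_, _, hres, _⟩, _⟩ := toAnnA_run_cons_inv h
    exact hres.elim

lemma Run.toAnnA {p : Q} {d : List A} {tr : List (Set (Marker X) × Q)} {pf : Q}
    (h : M.Run p d tr pf) {s : AnnState Q A} (hs : M.Resumes s p) :
    M.toAnnA.Run s (d.map some ++ [none]) (annTrace (d.map some ++ [none]) tr) := by
  induction h generalizing s with
  | last hV => exact toAnnA_run_cons ⟨_, _, hs, hV, rfl⟩ .nil
  | cons hV hl _ ih => exact toAnnA_run_cons ⟨_, _, hs, hV, rfl⟩ (ih hl)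

lemma Run.finalState_annTrace {p : Q} {d : List A} {tr : List (Set (Marker X) × Q)} {pf : Q}
    (h : M.Run p d tr pf) (s : AnnState Q A) :
    finalState s (annTrace (d.map some ++ [none]) tr) = .fin pf := by
  induction h generalizing s with
  | last => rfl
  | cons _ _ _ ih => exact (finalState_cons s _ _ _).trans (ih _)

lemma Run.annOf_annTrace {p : Q} {d : List A} {tr : List (Set (Marker X) × Q)} {pf : Q}
    (h : M.Run p d tr pf) (i : ℕ) :
    annOf i (annTrace (d.map some ++ [none]) tr) = markerAnnotation i (tr.map Prod.fst) := by
  induction h generalizing i with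
  | @last _ V _ _ =>
    by_cases hV : V = ∅ <;> simp [annTrace, toAnnotation, markerAnnotation, annOf, hV]
  | @cons _ V _ _ _ _ _ _ _ _ _ ih =>
    by_cases hV : V = ∅ <;> simp [annTrace, toAnnotation, markerAnnotation, annOf, hV, ← ih]

lemma exists_run_of_toAnnA_run : ∀ {s : AnnState Q A} {ws tr'}, M.toAnnA.Run s ws tr' →
    (∀ f, s ≠ .fin f) → (∃ f, finalState s tr' = .fin f) →
    ∃ p d tr pf, M.Resumes s p ∧ M.Run p d tr pf ∧ ws = d.map some ++ [none] ∧
      tr' = annTrace ws tr := by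
  intro s ws
  induction ws generalizing s with
  | nil =>
    rintro tr' h hs ⟨f, hf⟩
    cases h
    exact (hs f hf).elim
  | cons ℓ ws ih =>
    intro tr' h _ hfin
    obtain ⟨V, t, tr'', rfl, ⟨p, p', hres, hV, rfl⟩, hr⟩ := toAnnA_run_cons_inv h
    rw [finalState_cons] at hfin
    cases ℓ with
    | none =>
      obtain ⟨rfl, rfl⟩ := toAnnA_run_fin hr
      exact ⟨p, [], [(V, p')], p', hres, .last hV, rfl, rfl⟩
    | some a =>
      obtain ⟨q, d, tr, pf, hq, hrun, rfl, rfl⟩ := ih hr (fun _ => nofun) hfin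
      exact ⟨p, a :: d, (V, p') :: tr, pf, hres, .cons hV hq hrun, rfl, rfl⟩

theorem toAnnA_accepts_iff {ws : List (Option A)} {tr'} :
    (M.toAnnA.Run M.toAnnA.q0 ws tr' ∧ finalState M.toAnnA.q0 tr' ∈ M.toAnnA.F) ↔
      ∃ d tr pf, M.Run M.q0 d tr pf ∧ pf ∈ M.F ∧ ws = d.map some ++ [none] ∧
        tr' = annTrace ws tr := by
  constructor
  · rintro ⟨h, f, hf, hfin⟩
    obtain ⟨p, d, tr, pf, rfl, hrun, rfl, rfl⟩ :=
      exists_run_of_toAnnA_run h (fun _ => nofun) ⟨f, hfin.symm⟩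
    rw [hrun.finalState_annTrace] at hfin
    exact ⟨d, tr, pf, hrun, AnnState.fin.inj hfin ▸ hf, rfl, rfl⟩
  · rintro ⟨d, tr, pf, hrun, hpf, rfl, rfl⟩
    exact ⟨hrun.toAnnA rfl, pf, hpf, (hrun.finalState_annTrace _).symm⟩

lemma eq_of_map_some_append_none {d d' : List A}
    (h : d.map some ++ [none] = d'.map some ++ [none]) : d = d' :=
  List.map_injective_iff.2 (Option.some_injective A) (List.append_cancel_right h)

variable (M)

lemma sem_eq_image_mappingOf (hseq : M.Sequential) (d : List A) :
    M.sem d = mappingOf '' M.markerSeqs d := by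
  ext μ
  constructor
  · rintro ⟨tr, pf, hr, hpf, hv, hm⟩
    exact ⟨_, ⟨tr, pf, hr, hpf, rfl⟩, (mapOf_mappingOf hv).unique hm⟩
  · rintro ⟨_, ⟨tr, pf, hr, hpf, rfl⟩, rfl⟩
    have hv := hseq _ _ _ hr hpf
    exact ⟨tr, pf, hr, hpf, hv, mapOf_mappingOf hv⟩

lemma toAnnA_sem_eq_image_markerAnnotation (d : List A) :
    M.toAnnA.sem (d.map some ++ [none]) = markerAnnotation 0 '' M.markerSeqs d := by
  ext ν
  constructor
  · rintro ⟨tr', hr, hf, rfl⟩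
    obtain ⟨d', tr, pf, hrun, hpf, hd, rfl⟩ := toAnnA_accepts_iff.1 ⟨hr, hf⟩
    obtain rfl := eq_of_map_some_append_none hd
    exact ⟨_, ⟨tr, pf, hrun, hpf, rfl⟩, (hrun.annOf_annTrace 0).symm⟩
  · rintro ⟨_, ⟨tr, pf, hr, hpf, rfl⟩, rfl⟩
    obtain ⟨hrun, hfin⟩ := toAnnA_accepts_iff.2 ⟨d, tr, pf, hr, hpf, rfl, rfl⟩
    exact ⟨_, hrun, hfin, hr.annOf_annTrace 0⟩

lemma mappingOf_injOn_markerSeqs (hseq : M.Sequential) (d : List A) :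
    Set.InjOn mappingOf (M.markerSeqs d) := by
  rintro _ ⟨tr, pf, hr, hpf, rfl⟩ _ ⟨tr', pf', hr', hpf', rfl⟩ h
  have hv := hseq _ _ _ hr hpf
  have hv' := hseq _ _ _ hr' hpf'
  exact hv.eq_of_mapOf hv' (mapOf_mappingOf hv) (h ▸ mapOf_mappingOf hv')
    (by simp [hr.length_eq, hr'.length_eq])

lemma markerAnnotation_injOn_markerSeqs (d : List A) :
    Set.InjOn (markerAnnotation 0) (M.markerSeqs d) := by
  rintro _ ⟨tr, pf, hr, hpf, rfl⟩ _ ⟨tr', pf', hr', hpf', rfl⟩ h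
  exact markerAnnotation_inj (by simp [hr.length_eq, hr'.length_eq]) h

theorem toAnnA_unambiguous (hseq : M.Sequential) (hun : M.Unambiguous) :
    M.toAnnA.Unambiguous := by
  rintro ws ν tr₁' tr₂' hr₁ hf₁ rfl hr₂ hf₂ hann
  obtain ⟨d, tr₁, pf₁, hrun₁, hpf₁, rfl, rfl⟩ := toAnnA_accepts_iff.1 ⟨hr₁, hf₁⟩
  obtain ⟨d', tr₂, pf₂, hrun₂, hpf₂, hd, rfl⟩ := toAnnA_accepts_iff.1 ⟨hr₂, hf₂⟩
  obtain rfl := eq_of_map_some_append_none hd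
  have hVs : tr₁.map Prod.fst = tr₂.map Prod.fst :=
    markerAnnotation_inj (by simp [hrun₁.length_eq, hrun₂.length_eq])
      (by rw [← hrun₁.annOf_annTrace, ← hrun₂.annOf_annTrace, hann])
  have hv := hseq _ _ _ hrun₁ hpf₁
  rw [hun d _ tr₁ pf₁ tr₂ pf₂ hrun₁ hpf₁ (mapOf_mappingOf hv) hrun₂ hpf₂
    (hVs ▸ mapOf_mappingOf hv)]

end EVA

end Translation

/-- Every sequential extended variable-set automaton over alphabet `A` and
variables `X` translates into an annotated automaton over the alphabet
`A ∪ {#}` (here `Option A`, with `# = none`) and output alphabet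
`2^{markers}` such that for every document `d`, the mappings in `⟦M⟧(d)` are
in bijection with the annotations in `⟦M'⟧(d#)`; moreover, if `M` is
unambiguous then so is `M'`. -/
theorem eva_to_anna {Q A X : Type} (M : EVA Q A X) (hseq : M.Sequential) :
    ∃ (Q' : Type) (M' : AnnA Q' (Option A) (Set (Marker X))),
      (∀ d : List A,
        Nonempty ((M.sem d : Set (X → Option (ℕ × ℕ))) ≃
          (M'.sem (d.map some ++ [none]) : Set (List (Set (Marker X) × ℕ))))) ∧
      (M.Unambiguous → M'.Unambiguous) := by
  refine ⟨AnnState Q A, M.toAnnA, fun d => ?_, M.toAnnA_unambiguous hseq⟩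
  rw [M.sem_eq_image_mappingOf hseq, M.toAnnA_sem_eq_image_markerAnnotation]
  exact ⟨(Equiv.Set.imageOfInjOn _ _ (M.mappingOf_injOn_markerSeqs hseq d)).symm.trans
    (Equiv.Set.imageOfInjOn _ _ (M.markerAnnotation_injOn_markerSeqs d))⟩
end
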